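/- arXiv:2211.02152 — 5 statements merged into one kernel-verified Lean document; each statement's English description precedes it below -/
import Mathlib

section
/- Fix positive integers T and m, reals a_t, b_t for each t ∈ {1,…,T}, reals l_i < u_i for each i ∈ {1,…,m}, and functions g^t_i, h^t_i : ℝ → ℝ. Suppose for each t, i there are constants L^{gt}_i, L^{ht}_i > 0 such that |g^t_i(x₁) − g^t_i(x₂)| ≤ L^{gt}_i·|x₁ − x₂| and |h^t_i(x₁) − h^t_i(x₂)| ≤ L^{ht}_i·|x₁ − x₂| for all x₁, x₂ ∈ [l_i, u_i]. Let y ∈ ℝ^m with y_i ∈ {0,1} for all i, let x, x' ∈ ℝ^m with x_i, x'_i ∈ [l_i, u_i] for all i, and let ε > 0 with |x_i − x'_i| ≤ ε for all i. Suppose for each t there are constants H̲_t > 0 and F̄_t ≥ 0 such that H_t(y,x) ≥ H̲_t, H_t(y,x') ≥ H̲_t, |G_t(y,x)/H_t(y,x)| ≤ F̄_t, and |G_t(y,x')/H_t(y,x')| ≤ F̄_t. Then |f(y,x) − f(y,x')| ≤ ε · Σ_{t=1}^T ( Σ_{i=1}^m L^{gt}_i + F̄_t·Σ_{i=1}^m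 L^{ht}_i ) / H̲_t. -/
/-- Lemma 2 of the paper: Lipschitz-type bound for the sum-of-ratios objective
`f(y,x) = Σ_t G_t(y,x)/H_t(y,x)` when `‖x - x'‖_∞ ≤ ε`. -/
theorem stmt_3 (T m : ℕ) (hT : 0 < T) (hm : 0 < m)
    (a b : Fin T → ℝ) (l u : Fin m → ℝ) (hlu : ∀ i, l i < u i)
    (g h : Fin T → Fin m → ℝ → ℝ)
    (Lg Lh : Fin T → Fin m → ℝ)
    (hLg : ∀ t i, 0 < Lg t i) (hLh : ∀ t i, 0 < Lh t i)
    (hgLip : ∀ t i, ∀ x₁ ∈ Set.Icc (l i) (u i), ∀ x₂ ∈ Set.Icc (l i) (u i),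
        |g t i x₁ - g t i x₂| ≤ Lg t i * |x₁ - x₂|)
    (hhLip : ∀ t i, ∀ x₁ ∈ Set.Icc (l i) (u i), ∀ x₂ ∈ Set.Icc (l i) (u i),
        |h t i x₁ - h t i x₂| ≤ Lh t i * |x₁ - x₂|)
    (y x x' : Fin m → ℝ)
    (hy : ∀ i, y i = 0 ∨ y i = 1)
    (hx : ∀ i, x i ∈ Set.Icc (l i) (u i)) (hx' : ∀ i, x' i ∈ Set.Icc (l i) (u i))
    (ε : ℝ) (hε : 0 < ε) (hxx' : ∀ i, |x i - x' i| ≤ ε)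
    (Hlow Fbar : Fin T → ℝ) (hHlow : ∀ t, 0 < Hlow t) (hFbar : ∀ t, 0 ≤ Fbar t)
    (hH : ∀ t, Hlow t ≤ b t + ∑ i, y i * h t i (x i))
    (hH' : ∀ t, Hlow t ≤ b t + ∑ i, y i * h t i (x' i))
    (hF : ∀ t, |(a t + ∑ i, y i * g t i (x i)) / (b t + ∑ i, y i * h t i (x i))| ≤ Fbar t)
    (hF' : ∀ t, |(a t + ∑ i, y i * g t i (x' i)) / (b t + ∑ i, y i * h t i (x' i))| ≤ Fbar t) :
    |(∑ t, (a t + ∑ i, y i * g t i (x i)) / (b t + ∑ i, y i * h t i (x i))) -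
        (∑ t, (a t + ∑ i, y i * g t i (x' i)) / (b t + ∑ i, y i * h t i (x' i)))| ≤
      ε * ∑ t, ((∑ i, Lg t i) + Fbar t * ∑ i, Lh t i) / Hlow t := by
  have key : ∀ t : Fin T,
      |(a t + ∑ i, y i * g t i (x i)) / (b t + ∑ i, y i * h t i (x i)) -
        (a t + ∑ i, y i * g t i (x' i)) / (b t + ∑ i, y i * h t i (x' i))| ≤
      ε * (((∑ i, Lg t i) + Fbar t * ∑ i, Lh t i) / Hlow t) := by
    intro t
    set G := a t + ∑ i, y i * g t i (x i) with hGdef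
    set H := b t + ∑ i, y i * h t i (x i) with hHdef
    set G' := a t + ∑ i, y i * g t i (x' i) with hG'def
    set H' := b t + ∑ i, y i * h t i (x' i) with hH'def
    have hHpos : 0 < H := lt_of_lt_of_le (hHlow t) (hH t)
    have hH'pos : 0 < H' := lt_of_lt_of_le (hHlow t) (hH' t)
    have hy1 : ∀ i : Fin m, |y i| ≤ 1 := by
      intro i; rcases hy i with h0 | h0 <;> simp [h0]
    have hGG' : |G - G'| ≤ ε * ∑ i, Lg t i := by
      have e : G - G' = ∑ i, y i * (g t i (x i) - g t i (x' i)) := by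
        simp only [hGdef, hG'def, mul_sub, Finset.sum_sub_distrib]
        ring
      rw [e]
      calc |∑ i, y i * (g t i (x i) - g t i (x' i))|
          ≤ ∑ i, |y i * (g t i (x i) - g t i (x' i))| := Finset.abs_sum_le_sum_abs _ _
        _ ≤ ∑ i, Lg t i * ε := by
            refine Finset.sum_le_sum fun i _ => ?_
            rw [abs_mul]
            have h2 : |g t i (x i) - g t i (x' i)| ≤ Lg t i * ε := by
              refine le_trans (hgLip t i (x i) (hx i) (x' i) (hx' i)) ?_
              exact mul_le_mul_of_nonneg_left (hxx' i) (hLg t i).le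
            calc |y i| * |g t i (x i) - g t i (x' i)| ≤ 1 * (Lg t i * ε) :=
                  mul_le_mul (hy1 i) h2 (abs_nonneg _) zero_le_one
              _ = Lg t i * ε := one_mul _
        _ = ε * ∑ i, Lg t i := by rw [← Finset.sum_mul]; ring
    have hHH' : |H - H'| ≤ ε * ∑ i, Lh t i := by
      have e : H - H' = ∑ i, y i * (h t i (x i) - h t i (x' i)) := by
        simp only [hHdef, hH'def, mul_sub, Finset.sum_sub_distrib]
        ring
      rw [e]
      calc |∑ i, y i * (h t i (x i) - h t i (x' i))|
          ≤ ∑ i, |y i * (h t i (x i) - h t i (x' i))| := Finset.abs_sum_le_sum_abs _ _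
        _ ≤ ∑ i, Lh t i * ε := by
            refine Finset.sum_le_sum fun i _ => ?_
            rw [abs_mul]
            have h2 : |h t i (x i) - h t i (x' i)| ≤ Lh t i * ε := by
              refine le_trans (hhLip t i (x i) (hx i) (x' i) (hx' i)) ?_
              exact mul_le_mul_of_nonneg_left (hxx' i) (hLh t i).le
            calc |y i| * |h t i (x i) - h t i (x' i)| ≤ 1 * (Lh t i * ε) :=
                  mul_le_mul (hy1 i) h2 (abs_nonneg _) zero_le_one
              _ = Lh t i * ε := one_mul _
        _ = ε * ∑ i, Lh t i := by rw [← Finset.sum_mul]; ring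
    have decomp : G / H - G' / H' = (G - G') / H + (G' / H') * ((H' - H) / H) := by
      field_simp
      ring
    rw [decomp]
    have hg0 : 0 ≤ ε * ∑ i, Lg t i := le_trans (abs_nonneg _) hGG'
    have hh0 : 0 ≤ ε * ∑ i, Lh t i := le_trans (abs_nonneg _) hHH'
    have b1 : |(G - G') / H| ≤ (ε * ∑ i, Lg t i) / Hlow t := by
      rw [abs_div, abs_of_pos hHpos]
      exact div_le_div₀ hg0 hGG' (hHlow t) (hH t)
    have b2 : |(G' / H') * ((H' - H) / H)| ≤ Fbar t * ((ε * ∑ i, Lh t i) / Hlow t) := by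
      have e2 : |(H' - H) / H| = |H' - H| / H := by rw [abs_div, abs_of_pos hHpos]
      rw [abs_mul, e2]
      refine mul_le_mul (hF' t) ?_ (by positivity) (hFbar t)
      refine div_le_div₀ hh0 ?_ (hHlow t) (hH t)
      rw [abs_sub_comm]; exact hHH'
    calc |(G - G') / H + (G' / H') * ((H' - H) / H)|
        ≤ |(G - G') / H| + |(G' / H') * ((H' - H) / H)| := abs_add_le _ _
      _ ≤ (ε * ∑ i, Lg t i) / Hlow t + Fbar t * ((ε * ∑ i, Lh t i) / Hlow t) :=
          add_le_add b1 b2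
      _ = ε * (((∑ i, Lg t i) + Fbar t * ∑ i, Lh t i) / Hlow t) := by
          field_simp
  calc |(∑ t, (a t + ∑ i, y i * g t i (x i)) / (b t + ∑ i, y i * h t i (x i))) -
        (∑ t, (a t + ∑ i, y i * g t i (x' i)) / (b t + ∑ i, y i * h t i (x' i)))|
      = |∑ t, ((a t + ∑ i, y i * g t i (x i)) / (b t + ∑ i, y i * h t i (x i)) -
          (a t + ∑ i, y i * g t i (x' i)) / (b t + ∑ i, y i * h t i (x' i)))| := by
        rw [Finset.sum_sub_distrib]
    _ ≤ ∑ t, |(a t + ∑ i, y i * g t i (x i)) / (b t + ∑ i, y i * h t i (x i)) -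
          (a t + ∑ i, y i * g t i (x' i)) / (b t + ∑ i, y i * h t i (x' i))| :=
        Finset.abs_sum_le_sum_abs _ _
    _ ≤ ∑ t, ε * (((∑ i, Lg t i) + Fbar t * ∑ i, Lh t i) / Hlow t) :=
        Finset.sum_le_sum fun t _ => key t
    _ = ε * ∑ t, ((∑ i, Lg t i) + Fbar t * ∑ i, Lh t i) / Hlow t := by
        rw [Finset.mul_sum]
end

section
/- Fix positive integers T, m, K, reals a_t, b_t for t ∈ {1,…,T}, reals l_i < u_i for i ∈ {1,…,m}, set Δ_i = (u_i − l_i)/K, and let g^t_i, h^t_i : ℝ → ℝ be Lipschitz on [l_i, u_i] with constants L^{gt}_i, L^{ht}_i > 0 respectively. Let y ∈ ℝ^m with y_i ∈ {0,1} for all i and x ∈ ℝ^m with x_i ∈ [l_i, u_i] for all i. Suppose for each t there are constants H̲_t > 0 and F̄_t ≥ 0 with H_t(y,x) ≥ H̲_t, H_t(y,δ^K(x)) ≥ H̲_t, |G_t(y,x)/H_t(y,x)| ≤ F̄_t, and |G_t(y,δ^K(x))/H_t(y,δ^K(x))| ≤ F̄_t. Then, with C = Σ_{t=1}^T ( Σ_{i=1}^m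 L^{gt}_i + F̄_t·Σ_{i=1}^m L^{ht}_i ) / H̲_t, we have |f(y,x) − f(y,δ^K(x))| ≤ (C/K)·max_{i∈{1,…,m}}(u_i − l_i). -/
/-- Corollary 1 of the paper: the discretization error of the sum-of-ratios
objective is at most `(C/K)·max_i (u_i - l_i)`. -/
theorem stmt_4 (T m K : ℕ) (hT : 0 < T) (hm : 0 < m) (hK : 0 < K)
    (a b : Fin T → ℝ) (l u : Fin m → ℝ) (hlu : ∀ i, l i < u i)
    (Δ : Fin m → ℝ) (hΔ : ∀ i, Δ i = (u i - l i) / K)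
    (g h : Fin T → Fin m → ℝ → ℝ)
    (Lg Lh : Fin T → Fin m → ℝ)
    (hLg : ∀ t i, 0 < Lg t i) (hLh : ∀ t i, 0 < Lh t i)
    (hgLip : ∀ t i, ∀ x₁ ∈ Set.Icc (l i) (u i), ∀ x₂ ∈ Set.Icc (l i) (u i),
        |g t i x₁ - g t i x₂| ≤ Lg t i * |x₁ - x₂|)
    (hhLip : ∀ t i, ∀ x₁ ∈ Set.Icc (l i) (u i), ∀ x₂ ∈ Set.Icc (l i) (u i),
        |h t i x₁ - h t i x₂| ≤ Lh t i * |x₁ - x₂|)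
    (y x : Fin m → ℝ) (hy : ∀ i, y i = 0 ∨ y i = 1)
    (hx : ∀ i, x i ∈ Set.Icc (l i) (u i))
    (δx : Fin m → ℝ) (hδx : ∀ i, δx i = l i + Δ i * (⌊(x i - l i) / Δ i⌋ : ℝ))
    (Hlow Fbar : Fin T → ℝ) (hHlow : ∀ t, 0 < Hlow t) (hFbar : ∀ t, 0 ≤ Fbar t)
    (hH : ∀ t, Hlow t ≤ b t + ∑ i, y i * h t i (x i))
    (hHδ : ∀ t, Hlow t ≤ b t + ∑ i, y i * h t i (δx i))
    (hF : ∀ t, |(a t + ∑ i, y i * g t i (x i)) / (b t + ∑ i, y i * h t i (x i))| ≤ Fbar t)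
    (hFδ : ∀ t, |(a t + ∑ i, y i * g t i (δx i)) / (b t + ∑ i, y i * h t i (δx i))| ≤ Fbar t)
    (C : ℝ) (hC : C = ∑ t, ((∑ i, Lg t i) + Fbar t * ∑ i, Lh t i) / Hlow t) :
    |(∑ t, (a t + ∑ i, y i * g t i (x i)) / (b t + ∑ i, y i * h t i (x i))) -
        (∑ t, (a t + ∑ i, y i * g t i (δx i)) / (b t + ∑ i, y i * h t i (δx i)))| ≤
      (C / K) *
        Finset.univ.sup' (Finset.univ_nonempty_iff.mpr ⟨⟨0, hm⟩⟩) (fun i => u i - l i) := by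

  set M := Finset.univ.sup' (Finset.univ_nonempty_iff.mpr ⟨⟨0, hm⟩⟩) (fun i => u i - l i) with hM
  have hKpos : (0:ℝ) < K := by exact_mod_cast hK
  have hMpos : 0 < M := by
    have h0 := Finset.le_sup' (fun i => u i - l i) (Finset.mem_univ (⟨0, hm⟩ : Fin m))
    have := hlu ⟨0, hm⟩
    simp only [hM] at *
    linarith
  set ε : ℝ := M / K with hε
  have hεnn : 0 ≤ ε := le_of_lt (div_pos hMpos hKpos)
  have hδmem : ∀ i, δx i ∈ Set.Icc (l i) (u i) := by
    intro i
    have hΔpos : 0 < Δ i := by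
      rw [hΔ i]; exact div_pos (by linarith [hlu i]) hKpos
    have h0 : 0 ≤ x i - l i - ⌊(x i - l i) / Δ i⌋ * Δ i :=
      Int.sub_floor_div_mul_nonneg (x i - l i) hΔpos
    have hq : (0:ℝ) ≤ ⌊(x i - l i) / Δ i⌋ := by
      have : (0:ℤ) ≤ ⌊(x i - l i) / Δ i⌋ := by
        apply Int.floor_nonneg.mpr
        exact div_nonneg (by linarith [(hx i).1]) hΔpos.le
      exact_mod_cast this
    constructor
    · rw [hδx i]; nlinarith
    · rw [hδx i]
      have := (hx i).2
      nlinarith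
  have hdist : ∀ i, |x i - δx i| ≤ ε := by
    intro i
    have hΔpos : 0 < Δ i := by
      rw [hΔ i]; exact div_pos (by linarith [hlu i]) hKpos
    have h0 : 0 ≤ x i - l i - ⌊(x i - l i) / Δ i⌋ * Δ i :=
      Int.sub_floor_div_mul_nonneg (x i - l i) hΔpos
    have h1 : x i - l i - ⌊(x i - l i) / Δ i⌋ * Δ i < Δ i :=
      Int.sub_floor_div_mul_lt (x i - l i) hΔpos
    have hΔM : Δ i ≤ ε := by
      rw [hΔ i, hε]
      apply div_le_div_of_nonneg_right _ hKpos.le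
      exact Finset.le_sup' (fun i => u i - l i) (Finset.mem_univ i)
    rw [hδx i, abs_of_nonneg (by linarith)]
    linarith
  have hy1 : ∀ i, |y i| ≤ 1 := by
    intro i; rcases hy i with h' | h' <;> rw [h'] <;> norm_num
  have key : ∀ t : Fin T,
      |(a t + ∑ i, y i * g t i (x i)) / (b t + ∑ i, y i * h t i (x i)) -
        (a t + ∑ i, y i * g t i (δx i)) / (b t + ∑ i, y i * h t i (δx i))| ≤
      (((∑ i, Lg t i) + Fbar t * ∑ i, Lh t i) / Hlow t) * ε := by
    intro t
    set Gx := a t + ∑ i, y i * g t i (x i) with hGx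
    set Gd := a t + ∑ i, y i * g t i (δx i) with hGd
    set Hx := b t + ∑ i, y i * h t i (x i) with hHx
    set Hd := b t + ∑ i, y i * h t i (δx i) with hHd
    have hHxl : Hlow t ≤ Hx := hH t
    have hHdl : Hlow t ≤ Hd := hHδ t
    have hHlpos := hHlow t
    have hHxpos : 0 < Hx := lt_of_lt_of_le hHlpos hHxl
    have hHdpos : 0 < Hd := lt_of_lt_of_le hHlpos hHdl
    have sumbound : ∀ (φ : Fin T → Fin m → ℝ → ℝ) (L : Fin T → Fin m → ℝ),
        (∀ t i, 0 < L t i) →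
        (∀ t i, ∀ x₁ ∈ Set.Icc (l i) (u i), ∀ x₂ ∈ Set.Icc (l i) (u i),
          |φ t i x₁ - φ t i x₂| ≤ L t i * |x₁ - x₂|) →
        |(∑ i, y i * φ t i (x i)) - ∑ i, y i * φ t i (δx i)| ≤ (∑ i, L t i) * ε := by
      intro φ L hLpos hLip
      rw [← Finset.sum_sub_distrib, Finset.sum_mul]
      refine le_trans (Finset.abs_sum_le_sum_abs _ _) (Finset.sum_le_sum ?_)
      intro i _
      have h2 : y i * φ t i (x i) - y i * φ t i (δx i) = y i * (φ t i (x i) - φ t i (δx i)) := by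
        ring
      rw [h2, abs_mul]
      have h3 : |φ t i (x i) - φ t i (δx i)| ≤ L t i * ε := by
        refine le_trans (hLip t i _ (hx i) _ (hδmem i)) ?_
        exact mul_le_mul_of_nonneg_left (hdist i) (hLpos t i).le
      calc |y i| * |φ t i (x i) - φ t i (δx i)| ≤ 1 * (L t i * ε) :=
            mul_le_mul (hy1 i) h3 (abs_nonneg _) zero_le_one
        _ = L t i * ε := by ring
    have hGdiff : |Gx - Gd| ≤ (∑ i, Lg t i) * ε := by
      have := sumbound g Lg hLg hgLip
      rw [hGx, hGd]
      have h4 : a t + (∑ i, y i * g t i (x i)) - (a t + ∑ i, y i * g t i (δx i)) =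
          (∑ i, y i * g t i (x i)) - ∑ i, y i * g t i (δx i) := by ring
      rw [h4]; exact this
    have hHdiff : |Hd - Hx| ≤ (∑ i, Lh t i) * ε := by
      have := sumbound h Lh hLh hhLip
      rw [hHx, hHd, abs_sub_comm]
      have h4 : b t + (∑ i, y i * h t i (x i)) - (b t + ∑ i, y i * h t i (δx i)) =
          (∑ i, y i * h t i (x i)) - ∑ i, y i * h t i (δx i) := by ring
      rw [h4]; exact this
    have hFd : |Gd / Hd| ≤ Fbar t := hFδ t
    have hsplit : Gx / Hx - Gd / Hd = (Gx - Gd) / Hx + (Gd / Hd) * ((Hd - Hx) / Hx) := by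
      field_simp
      ring
    have hSgnn : 0 ≤ (∑ i, Lg t i) := Finset.sum_nonneg fun i _ => (hLg t i).le
    have hShnn : 0 ≤ (∑ i, Lh t i) := Finset.sum_nonneg fun i _ => (hLh t i).le
    calc |Gx / Hx - Gd / Hd| = |(Gx - Gd) / Hx + (Gd / Hd) * ((Hd - Hx) / Hx)| := by
          rw [hsplit]
      _ ≤ |(Gx - Gd) / Hx| + |(Gd / Hd) * ((Hd - Hx) / Hx)| := abs_add_le _ _
      _ = |Gx - Gd| / Hx + |Gd / Hd| * (|Hd - Hx| / Hx) := by
          rw [abs_mul, abs_div (Gx - Gd), abs_div (Hd - Hx), abs_of_pos hHxpos]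
      _ ≤ ((∑ i, Lg t i) * ε) / Hlow t + Fbar t * (((∑ i, Lh t i) * ε) / Hlow t) := by
          gcongr
          all_goals first
            | exact hFbar t
            | exact mul_nonneg hShnn hεnn
            | positivity
      _ = (((∑ i, Lg t i) + Fbar t * ∑ i, Lh t i) / Hlow t) * ε := by
          field_simp
  rw [← Finset.sum_sub_distrib]
  calc |∑ t, ((a t + ∑ i, y i * g t i (x i)) / (b t + ∑ i, y i * h t i (x i)) -
        (a t + ∑ i, y i * g t i (δx i)) / (b t + ∑ i, y i * h t i (δx i)))|
      ≤ ∑ t, |(a t + ∑ i, y i * g t i (x i)) / (b t + ∑ i, y i * h t i (x i)) -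
        (a t + ∑ i, y i * g t i (δx i)) / (b t + ∑ i, y i * h t i (δx i))| :=
        Finset.abs_sum_le_sum_abs _ _
    _ ≤ ∑ t, (((∑ i, Lg t i) + Fbar t * ∑ i, Lh t i) / Hlow t) * ε :=
        Finset.sum_le_sum fun t _ => key t
    _ = C * ε := by rw [hC, Finset.sum_mul]
    _ = (C / K) * M := by rw [hε]; ring
end

section
/- Fix positive integers T, m, K, reals a_t, b_t for t ∈ {1,…,T}, reals l_i < u_i for i ∈ {1,…,m}, set Δ_i = (u_i − l_i)/K, and let g^t_i, h^t_i : ℝ → ℝ be Lipschitz on [l_i, u_i] with constants L^{gt}_i, L^{ht}_i > 0 respectively. Let S be a nonempty set of pairs (y,x) ∈ ℝ^m × ℝ^m such that every (y,x) ∈ S has y_i ∈ {0,1} and x_i ∈ [l_i, u_i] for all i, and such that S is closed under discretization of the second component: (y,x) ∈ S implies (y, δ^K(x)) ∈ S. Suppose there are constants H̲_t > 0 and F̄_t ≥ 0 such that for all (y,x) ∈ S and all t: H_t(y,x) ≥ H̲_t and |G_t(y,x)/H_t(y,x)| ≤ F̄_t. Let C = Σ_{t=1}^T ( Σ_{i=1}^m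 L^{gt}_i + F̄_t·Σ_{i=1}^m L^{ht}_i ) / H̲_t. If (y*,x*) ∈ S maximizes f over S, i.e. f(y,x) ≤ f(y*,x*) for all (y,x) ∈ S, and (y^K,x^K) ∈ S maximizes the discretized objective over S, i.e. f(y,δ^K(x)) ≤ f(y^K,δ^K(x^K)) for all (y,x) ∈ S, then 0 ≤ f(y*,x*) − f(y^K,x^K) ≤ (2C/K)·max_{i∈{1,…,m}}(u_i − l_i). -/
/-- Theorem 1 of the paper: solutions of the discretized problem are
`(2C/K)·max_i(u_i - l_i)`-optimal for the original sum-of-ratios problem. -/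
theorem stmt_6 (T m K : ℕ) (hT : 0 < T) (hm : 0 < m) (hK : 0 < K)
    (a b : Fin T → ℝ) (l u : Fin m → ℝ) (hlu : ∀ i, l i < u i)
    (Δ : Fin m → ℝ) (hΔ : ∀ i, Δ i = (u i - l i) / K)
    (g h : Fin T → Fin m → ℝ → ℝ)
    (Lg Lh : Fin T → Fin m → ℝ)
    (hLg : ∀ t i, 0 < Lg t i) (hLh : ∀ t i, 0 < Lh t i)
    (hgLip : ∀ t i, ∀ x₁ ∈ Set.Icc (l i) (u i), ∀ x₂ ∈ Set.Icc (l i) (u i),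
        |g t i x₁ - g t i x₂| ≤ Lg t i * |x₁ - x₂|)
    (hhLip : ∀ t i, ∀ x₁ ∈ Set.Icc (l i) (u i), ∀ x₂ ∈ Set.Icc (l i) (u i),
        |h t i x₁ - h t i x₂| ≤ Lh t i * |x₁ - x₂|)
    (f : (Fin m → ℝ) → (Fin m → ℝ) → ℝ)
    (hf : ∀ y x, f y x =
        ∑ t, (a t + ∑ i, y i * g t i (x i)) / (b t + ∑ i, y i * h t i (x i)))
    (δK : (Fin m → ℝ) → (Fin m → ℝ))
    (hδK : ∀ x i, δK x i = l i + Δ i * (⌊(x i - l i) / Δ i⌋ : ℝ))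
    (S : Set ((Fin m → ℝ) × (Fin m → ℝ))) (hSne : S.Nonempty)
    (hSbin : ∀ p ∈ S, ∀ i, p.1 i = 0 ∨ p.1 i = 1)
    (hSbox : ∀ p ∈ S, ∀ i, p.2 i ∈ Set.Icc (l i) (u i))
    (hSclosed : ∀ p ∈ S, (p.1, δK p.2) ∈ S)
    (Hlow Fbar : Fin T → ℝ) (hHlow : ∀ t, 0 < Hlow t) (hFbar : ∀ t, 0 ≤ Fbar t)
    (hH : ∀ p ∈ S, ∀ t, Hlow t ≤ b t + ∑ i, p.1 i * h t i (p.2 i))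
    (hF : ∀ p ∈ S, ∀ t,
        |(a t + ∑ i, p.1 i * g t i (p.2 i)) / (b t + ∑ i, p.1 i * h t i (p.2 i))| ≤ Fbar t)
    (C : ℝ) (hC : C = ∑ t, ((∑ i, Lg t i) + Fbar t * ∑ i, Lh t i) / Hlow t)
    (ystar xstar : Fin m → ℝ) (hstar : (ystar, xstar) ∈ S)
    (hstarmax : ∀ p ∈ S, f p.1 p.2 ≤ f ystar xstar)
    (yK xK : Fin m → ℝ) (hKmem : (yK, xK) ∈ S)
    (hKmax : ∀ p ∈ S, f p.1 (δK p.2) ≤ f yK (δK xK)) :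
    0 ≤ f ystar xstar - f yK xK ∧
      f ystar xstar - f yK xK ≤
        (2 * C / K) *
          Finset.univ.sup' (Finset.univ_nonempty_iff.mpr ⟨⟨0, hm⟩⟩) (fun i => u i - l i) := by
  have hKR : (0:ℝ) < K := by exact_mod_cast hK
  set M := Finset.univ.sup' (Finset.univ_nonempty_iff.mpr ⟨⟨0, hm⟩⟩) (fun i => u i - l i)
    with hMdef
  have hMle : ∀ i, u i - l i ≤ M := fun i => Finset.le_sup' (fun i => u i - l i) (Finset.mem_univ i)
  have hdist : ∀ x : Fin m → ℝ, ∀ i, |x i - δK x i| ≤ M / K := by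
    intro x i
    have hΔpos : 0 < Δ i := by
      rw [hΔ i]; exact div_pos (sub_pos.mpr (hlu i)) hKR
    set r := (x i - l i) / Δ i with hr
    have hΔr : Δ i * r = x i - l i := mul_div_cancel₀ _ (ne_of_gt hΔpos)
    have h1 : Δ i * (⌊r⌋ : ℝ) ≤ Δ i * r :=
      mul_le_mul_of_nonneg_left (Int.floor_le r) hΔpos.le
    have h2 : Δ i * r ≤ Δ i * ((⌊r⌋ : ℝ) + 1) :=
      mul_le_mul_of_nonneg_left (Int.lt_floor_add_one r).le hΔpos.le
    have hΔM : Δ i ≤ M / K := by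
      rw [hΔ i]
      gcongr
      exact hMle i
    refine le_trans ?_ hΔM
    rw [hδK x i]
    rw [abs_le]
    constructor <;> nlinarith [hΔr, h1, h2]
  have key : ∀ p ∈ S, |f p.1 p.2 - f p.1 (δK p.2)| ≤ C * (M / K) := by
    intro p hp
    obtain ⟨y, x⟩ := p
    have hq : (y, δK x) ∈ S := hSclosed _ hp
    have hy : ∀ i, |y i| ≤ 1 := by
      intro i
      rcases hSbin _ hp i with h0 | h0
      · rw [show y i = 0 from h0]; norm_num
      · rw [show y i = 1 from h0]; norm_num
    show |f y x - f y (δK x)| ≤ C * (M / K)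
    rw [hf, hf, ← Finset.sum_sub_distrib, hC, Finset.sum_mul]
    refine (Finset.abs_sum_le_sum_abs _ _).trans (Finset.sum_le_sum ?_)
    intro t _
    set G := a t + ∑ i, y i * g t i (x i) with hG
    set G' := a t + ∑ i, y i * g t i (δK x i) with hG'
    set H := b t + ∑ i, y i * h t i (x i) with hHdef
    set H' := b t + ∑ i, y i * h t i (δK x i) with hH'def
    have hHlowpos := hHlow t
    have hHlow1 : Hlow t ≤ H := hH _ hp t
    have hHlow2 : Hlow t ≤ H' := hH _ hq t
    have hHpos : 0 < H := lt_of_lt_of_le hHlowpos hHlow1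
    have hH'pos : 0 < H' := lt_of_lt_of_le hHlowpos hHlow2
    have hFq : |G' / H'| ≤ Fbar t := hF _ hq t
    have hGdiff : |G - G'| ≤ (∑ i, Lg t i) * (M / K) := by
      have hGG : G - G' = ∑ i, y i * (g t i (x i) - g t i (δK x i)) := by
        simp only [hG, hG', mul_sub, Finset.sum_sub_distrib]; ring
      rw [hGG, Finset.sum_mul]
      refine (Finset.abs_sum_le_sum_abs _ _).trans (Finset.sum_le_sum ?_)
      intro i _
      rw [abs_mul]
      calc |y i| * |g t i (x i) - g t i (δK x i)|
          ≤ 1 * (Lg t i * |x i - δK x i|) :=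
            mul_le_mul (hy i) (hgLip t i _ (hSbox _ hp i) _ (hSbox _ hq i))
              (abs_nonneg _) zero_le_one
        _ = Lg t i * |x i - δK x i| := one_mul _
        _ ≤ Lg t i * (M / K) := mul_le_mul_of_nonneg_left (hdist x i) (hLg t i).le
    have hHdiff : |H' - H| ≤ (∑ i, Lh t i) * (M / K) := by
      have hHH : H' - H = ∑ i, y i * (h t i (δK x i) - h t i (x i)) := by
        simp only [hHdef, hH'def, mul_sub, Finset.sum_sub_distrib]; ring
      rw [hHH, Finset.sum_mul]
      refine (Finset.abs_sum_le_sum_abs _ _).trans (Finset.sum_le_sum ?_)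
      intro i _
      rw [abs_mul]
      calc |y i| * |h t i (δK x i) - h t i (x i)|
          ≤ 1 * (Lh t i * |δK x i - x i|) :=
            mul_le_mul (hy i) (hhLip t i _ (hSbox _ hq i) _ (hSbox _ hp i))
              (abs_nonneg _) zero_le_one
        _ = Lh t i * |δK x i - x i| := one_mul _
        _ ≤ Lh t i * (M / K) := by
            rw [abs_sub_comm]
            exact mul_le_mul_of_nonneg_left (hdist x i) (hLh t i).le
    have hsplit : G / H - G' / H' = (G - G') / H + (G' / H') * ((H' - H) / H) := by
      field_simp
      ring
    calc |G / H - G' / H'|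
        ≤ |G - G'| / H + |G' / H'| * (|H' - H| / H) := by
          rw [hsplit]
          refine (abs_add_le _ _).trans ?_
          rw [abs_div (G - G') H, abs_mul, abs_div (H' - H) H, abs_of_pos hHpos]
      _ ≤ ((∑ i, Lg t i) * (M / K)) / Hlow t
            + Fbar t * (((∑ i, Lh t i) * (M / K)) / Hlow t) := by
          have hMK0 : 0 ≤ M / K := le_trans (abs_nonneg _) (hdist x ⟨0, hm⟩)
          refine add_le_add ?_ ?_
          · exact div_le_div₀
              (mul_nonneg (Finset.sum_nonneg fun i _ => (hLg t i).le) hMK0)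
              hGdiff hHlowpos hHlow1
          · refine mul_le_mul hFq
              (div_le_div₀ (mul_nonneg (Finset.sum_nonneg fun i _ => (hLh t i).le) hMK0)
                hHdiff hHlowpos hHlow1)
              (div_nonneg (abs_nonneg _) hHpos.le) (hFbar t)
      _ = ((∑ i, Lg t i) + Fbar t * ∑ i, Lh t i) / Hlow t * (M / K) := by ring
  constructor
  · have := hstarmax (yK, xK) hKmem
    linarith
  · have h1 : |f ystar xstar - f ystar (δK xstar)| ≤ C * (M / K) := key (ystar, xstar) hstar
    have h2 : |f yK xK - f yK (δK xK)| ≤ C * (M / K) := key (yK, xK) hKmem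
    have h3 : f ystar (δK xstar) ≤ f yK (δK xK) := hKmax (ystar, xstar) hstar
    have e1 := abs_le.mp h1
    have e2 := abs_le.mp h2
    have hring : (2 * C / K) * M = C * (M / K) + C * (M / K) := by ring
    linarith [e1.2, e2.1, h3]
end

section
/- Let T and n be positive integers, and for each t ∈ {1,…,T} let q_t ≥ 0 and U_t ≥ 0 be reals, c_t ∈ ℝⁿ, and b_t ∈ ℝ. The function v ↦ Σ_{t=1}^T ( q_t − q_t·U_t/(b_t + Σ_{j=1}^n (c_t)_j·v_j) ) is concave on the convex set {v ∈ ℝⁿ : b_t + Σ_{j=1}^n (c_t)_j·v_j > 0 for all t ∈ {1,…,T}}. -/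
open Set

private lemma concaveOn_finset_sum' {E : Type*} [AddCommMonoid E] [Module ℝ E]
    {s : Set E} (hs : Convex ℝ s) {ι : Type*} (t : Finset ι) {f : ι → E → ℝ}
    (h : ∀ i ∈ t, ConcaveOn ℝ s (f i)) :
    ConcaveOn ℝ s (fun x => ∑ i ∈ t, f i x) := by
  classical
  induction t using Finset.induction_on with
  | empty => simpa using concaveOn_const 0 hs
  | @insert a u hi ih =>
    simp only [Finset.sum_insert hi]
    exact (h a (Finset.mem_insert_self a u)).add
      (ih fun i hiu => h i (Finset.mem_insert_of_mem hiu))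

/-- Concavity of the discretized maximum-capture objective
`v ↦ Σ_t (q_t - q_t U_t / (b_t + Σ_j (c_t)_j v_j))` on the region where all
affine denominators are positive. -/
theorem stmt_12 (T n : ℕ) (hT : 0 < T) (hn : 0 < n)
    (q U : Fin T → ℝ) (hq : ∀ t, 0 ≤ q t) (hU : ∀ t, 0 ≤ U t)
    (c : Fin T → Fin n → ℝ) (b : Fin T → ℝ) :
    ConcaveOn ℝ {v : Fin n → ℝ | ∀ t, 0 < b t + ∑ j, c t j * v j}
      (fun v => ∑ t, (q t - q t * U t / (b t + ∑ j, c t j * v j))) := by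
  set S : Set (Fin n → ℝ) := {v : Fin n → ℝ | ∀ t, 0 < b t + ∑ j, c t j * v j}
  have hgS : ∀ (t : Fin T), Convex ℝ {v : Fin n → ℝ | 0 < b t + ∑ j, c t j * v j} := by
    intro t x hx y hy a bb ha hb hab
    simp only [mem_setOf_eq] at hx hy ⊢
    have key : b t + ∑ j, c t j * (a • x + bb • y) j
        = a * (b t + ∑ j, c t j * x j) + bb * (b t + ∑ j, c t j * y j) := by
      have h1 : ∑ j, c t j * (a • x + bb • y) j
          = a * ∑ j, c t j * x j + bb * ∑ j, c t j * y j := by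
        rw [Finset.mul_sum, Finset.mul_sum, ← Finset.sum_add_distrib]
        exact Finset.sum_congr rfl fun j _ => by
          simp only [Pi.add_apply, Pi.smul_apply, smul_eq_mul]; ring
      rw [h1]; linear_combination (b t) * hab.symm
    rw [key]
    rcases eq_or_lt_of_le ha with ha' | ha'
    · rcases eq_or_lt_of_le hb with hb' | hb'
      · exfalso; rw [← ha', ← hb'] at hab; simp at hab
      · rw [← ha']; simpa using mul_pos hb' hy
    · rcases eq_or_lt_of_le hb with hb' | hb'
      · rw [← hb']; simpa using mul_pos ha' hx
      · exact add_pos (mul_pos ha' hx) (mul_pos hb' hy)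
  have hSconv : Convex ℝ S := by
    have hSeq : S = ⋂ t, {v : Fin n → ℝ | 0 < b t + ∑ j, c t j * v j} := by
      ext v; simp [S]
    rw [hSeq]
    exact convex_iInter fun t => hgS t
  apply concaveOn_finset_sum' hSconv
  intro t _
  have hinv : ConvexOn ℝ (Ioi (0:ℝ)) fun x : ℝ => x⁻¹ := by
    have := (strictConvexOn_zpow (m := -1) (by norm_num) (by norm_num)).convexOn
    simpa using this
  let L : (Fin n → ℝ) →ₗ[ℝ] ℝ :=
    { toFun := fun v => ∑ j, c t j * v j
      map_add' := fun x y => by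
        simp only [Pi.add_apply, mul_add, Finset.sum_add_distrib]
      map_smul' := fun a x => by
        simp only [smul_eq_mul, RingHom.id_apply, Finset.mul_sum]
        exact Finset.sum_congr rfl fun j _ => by
          simp only [Pi.smul_apply, smul_eq_mul]; ring }
  let g : (Fin n → ℝ) →ᵃ[ℝ] ℝ :=
    { toFun := fun v => b t + ∑ j, c t j * v j
      linear := L
      map_vadd' := fun p v => by
        simp only [L, LinearMap.coe_mk, AddHom.coe_mk, vadd_eq_add, Pi.add_apply,
          mul_add, Finset.sum_add_distrib]
        ring }
  have hcomp : ConvexOn ℝ (g ⁻¹' (Ioi 0)) ((fun x : ℝ => x⁻¹) ∘ g) :=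
    hinv.comp_affineMap g
  have hsub : S ⊆ g ⁻¹' (Ioi 0) := fun v hv => by
    simpa [g] using hv t
  have hconv : ConvexOn ℝ S fun v => q t * U t * (b t + ∑ j, c t j * v j)⁻¹ := by
    have := (hcomp.subset hsub hSconv).smul (c := q t * U t)
      (mul_nonneg (hq t) (hU t))
    simpa [g, Function.comp, smul_eq_mul] using this
  have hfin : ConcaveOn ℝ S fun v => q t - q t * U t * (b t + ∑ j, c t j * v j)⁻¹ :=
    (concaveOn_const (q t) hSconv).sub hconv
  simpa [div_eq_mul_inv, Pi.sub_def] using hfin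
end

section
/- Fix positive integers m, K, T, n, reals l_i < u_i for i ∈ {1,…,m}, set Δ_i = (u_i − l_i)/K, fix reals a_t, b_t, ḡ_{ti}, h̄_{ti} for t ∈ {1,…,T}, i ∈ {1,…,m}, reals γ^{g}_{tik}, γ^{h}_{tik} for t ∈ {1,…,T}, i ∈ {1,…,m}, k ∈ {1,…,K}, real n×m matrices A, B, a vector D ∈ ℝⁿ, and a set Y ⊆ ℝ^m all of whose elements have coordinates in {0,1}. Assume the monotonicity condition (A2): for all y ∈ Y and x, x' ∈ ℝ^m with x_i, x'_i ∈ [l_i,u_i] and x'_i ≤ x_i for all i, if A·x + B·y ≤ D then A·x' + B·y ≤ D. Define the feasible set Ŝ of all (y, z, x, r) with y ∈ Y, z ∈ {0,1}^{m×K} with z_{ik} ≥ z_{i,k+1} for all i and k < K, x_i = l_i + Δ_i·Σ_{k=1}^K z_{ik} + r_i and r_i ∈ [0, Δ_i) and x_i ∈ [l_i,u_i] for all i, and A·x + B·y ≤ D; and the feasible set S̃ of all (y, z, x) with y ∈ Y, z ∈ {0,1}^{m×K} with z_{ik} ≥ z_{i,k+1} for all i and k < K, y_i ≥ z_{i1}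 for all i, x_i = l_i + Δ_i·Σ_{k=1}^K z_{ik} ∈ [l_i,u_i] for all i, and A·x + B·y ≤ D. Then the set of objective values { Σ_{t=1}^T N̂_t(y,z)/D̂_t(y,z) : (y,z,x,r) ∈ Ŝ } equals the set { Σ_{t=1}^T Ñ_t(y,z)/D̃_t(y,z) : (y,z,x) ∈ S̃ }; in particular the optimal values of the two mixed-integer programs coincide. -/
/-- Proposition 1 of the paper: under the monotonicity condition (A2), the
approximate problem with bilinear products `y_i z_{ik}` and residuals `r_i`
has exactly the same set of objective values as the simplified problem
without products (with the linking constraints `y_i ≥ z_{i1}`). -/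
theorem stmt_14 (m K T n : ℕ) (hm : 0 < m) (hK : 0 < K) (hT : 0 < T) (hn : 0 < n)
    (l u : Fin m → ℝ) (hlu : ∀ i, l i < u i)
    (Δ : Fin m → ℝ) (hΔ : ∀ i, Δ i = (u i - l i) / K)
    (a b : Fin T → ℝ) (gbar hbar : Fin T → Fin m → ℝ)
    (γg γh : Fin T → Fin m → Fin K → ℝ)
    (A B : Matrix (Fin n) (Fin m) ℝ) (D : Fin n → ℝ)
    (Y : Set (Fin m → ℝ)) (hY : ∀ y ∈ Y, ∀ i, y i = 0 ∨ y i = 1)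
    (hA2 : ∀ y ∈ Y, ∀ x x' : Fin m → ℝ,
        (∀ i, x i ∈ Set.Icc (l i) (u i)) → (∀ i, x' i ∈ Set.Icc (l i) (u i)) →
        (∀ i, x' i ≤ x i) →
        (∀ j, A.mulVec x j + B.mulVec y j ≤ D j) →
        (∀ j, A.mulVec x' j + B.mulVec y j ≤ D j)) :
    {v : ℝ | ∃ (y : Fin m → ℝ) (z : Fin m → Fin K → ℝ) (x r : Fin m → ℝ),
        y ∈ Y ∧ (∀ i k, z i k = 0 ∨ z i k = 1) ∧
        (∀ i, ∀ k : ℕ, ∀ hk : k + 1 < K,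
          z i ⟨k + 1, hk⟩ ≤ z i ⟨k, Nat.lt_of_succ_lt hk⟩) ∧
        (∀ i, x i = l i + Δ i * ∑ k, z i k + r i) ∧
        (∀ i, r i ∈ Set.Ico 0 (Δ i)) ∧
        (∀ i, x i ∈ Set.Icc (l i) (u i)) ∧
        (∀ j, A.mulVec x j + B.mulVec y j ≤ D j) ∧
        v = ∑ t,
          (a t + (∑ i, y i * gbar t i) + ∑ i, Δ i * ∑ k, γg t i k * (y i * z i k)) /
          (b t + (∑ i, y i * hbar t i) + ∑ i, Δ i * ∑ k, γh t i k * (y i * z i k))} =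
    {v : ℝ | ∃ (y : Fin m → ℝ) (z : Fin m → Fin K → ℝ) (x : Fin m → ℝ),
        y ∈ Y ∧ (∀ i k, z i k = 0 ∨ z i k = 1) ∧
        (∀ i, ∀ k : ℕ, ∀ hk : k + 1 < K,
          z i ⟨k + 1, hk⟩ ≤ z i ⟨k, Nat.lt_of_succ_lt hk⟩) ∧
        (∀ i, z i ⟨0, hK⟩ ≤ y i) ∧
        (∀ i, x i = l i + Δ i * ∑ k, z i k) ∧
        (∀ i, x i ∈ Set.Icc (l i) (u i)) ∧
        (∀ j, A.mulVec x j + B.mulVec y j ≤ D j) ∧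
        v = ∑ t,
          (a t + (∑ i, y i * gbar t i) + ∑ i, Δ i * ∑ k, γg t i k * z i k) /
          (b t + (∑ i, y i * hbar t i) + ∑ i, Δ i * ∑ k, γh t i k * z i k)} := by
  have hΔpos : ∀ i, 0 < Δ i := by
    intro i
    rw [hΔ i]
    exact div_pos (sub_pos.mpr (hlu i)) (by exact_mod_cast hK)
  ext v
  simp only [Set.mem_setOf_eq]
  constructor
  · rintro ⟨y, z, x, r, hYy, hz01, hmono, hx, hr, hxIcc, hcon, hv⟩
    set z' : Fin m → Fin K → ℝ := fun i k => y i * z i k with hz'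
    set x' : Fin m → ℝ := fun i => l i + Δ i * ∑ k, z' i k with hx'
    have hz0 : ∀ i k, 0 ≤ z i k := fun i k => by rcases hz01 i k with h | h <;> simp [h]
    have hz1 : ∀ i k, z i k ≤ 1 := fun i k => by rcases hz01 i k with h | h <;> simp [h]
    have hy0 : ∀ i, 0 ≤ y i := fun i => by rcases hY y hYy i with h | h <;> simp [h]
    have hz'le : ∀ i k, z' i k ≤ z i k := by
      intro i k
      rcases hY y hYy i with h | h <;> simp [hz', h, hz0 i k]
    have hx'le : ∀ i, x' i ≤ x i := by
      intro i
      have h1 : Δ i * ∑ k, z' i k ≤ Δ i * ∑ k, z i k :=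
        mul_le_mul_of_nonneg_left (Finset.sum_le_sum fun k _ => hz'le i k) (hΔpos i).le
      have h2 := (hr i).1
      calc x' i = l i + Δ i * ∑ k, z' i k := rfl
        _ ≤ l i + Δ i * ∑ k, z i k + r i := by linarith
        _ = x i := (hx i).symm
    have hx'Icc : ∀ i, x' i ∈ Set.Icc (l i) (u i) := by
      intro i
      constructor
      · have : 0 ≤ ∑ k, z' i k :=
          Finset.sum_nonneg fun k _ => mul_nonneg (hy0 i) (hz0 i k)
        have := mul_nonneg (hΔpos i).le this
        simp only [hx']
        linarith
      · exact (hx'le i).trans (hxIcc i).2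
    refine ⟨y, z', x', hYy, ?_, ?_, ?_, fun i => rfl, hx'Icc,
      hA2 y hYy x x' hxIcc hx'Icc hx'le hcon, hv⟩
    · intro i k
      rcases hY y hYy i with h | h
      · left; simp [hz', h]
      · rcases hz01 i k with h2 | h2
        · left; simp [hz', h, h2]
        · right; simp [hz', h, h2]
    · intro i k hk
      exact mul_le_mul_of_nonneg_left (hmono i k hk) (hy0 i)
    · intro i
      rcases hY y hYy i with h | h
      · simp [hz', h]
      · calc z' i ⟨0, hK⟩ = y i * z i ⟨0, hK⟩ := rfl
          _ ≤ y i * 1 := mul_le_mul_of_nonneg_left (hz1 i _) (hy0 i)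
          _ = y i := mul_one _
  · rintro ⟨y, z, x, hYy, hz01, hmono, hlink, hx, hxIcc, hcon, hv⟩
    have hz0 : ∀ i k, 0 ≤ z i k := fun i k => by rcases hz01 i k with h | h <;> simp [h]
    have hchain : ∀ i (kv : ℕ) (hk : kv < K), z i ⟨kv, hk⟩ ≤ z i ⟨0, hK⟩ := by
      intro i kv
      induction kv with
      | zero => intro hk; exact le_rfl
      | succ n ih =>
        intro hk
        exact (hmono i n hk).trans (ih (Nat.lt_of_succ_lt hk))
    have hyz : ∀ i k, y i * z i k = z i k := by
      intro i k
      rcases hY y hYy i with h | h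
      · have h0 : z i k = 0 := le_antisymm (by
          calc z i k = z i ⟨k.1, k.2⟩ := by rfl
          _ ≤ z i ⟨0, hK⟩ := hchain i k.1 k.2
          _ ≤ y i := hlink i
          _ = 0 := h) (hz0 i k)
        simp [h, h0]
      · simp [h]
    refine ⟨y, z, x, fun _ => 0, hYy, hz01, hmono, ?_, fun i => ⟨le_rfl, hΔpos i⟩,
      hxIcc, hcon, ?_⟩
    · intro i; rw [hx i]; ring
    · rw [hv]
      simp only [hyz]
end
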